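/- Let φ ∈ Lip_0(M)* be normal, let f ∈ Lip_0(M) be non-negative with bounded support, let ε > 0, and let E_k be an increasing sequence of finite subsets of M with union E. Define e_k(x) = max(1 − (1/ε)·d(x,E_k), 0). Then the sequence (e_k·f) is norm-bounded in Lip_0(M), increases pointwise to a limit g with g = f on E, and φ(e_k·f) converges. -/

import Mathlib

open Filter Metric Topology NNReal


/-- The set of Lipschitz functions `M → ℝ` vanishing at the base point, as a
submodule of `M → ℝ`. -/
def Lip0Sub (M : Type*) [MetricSpace M] (base : M) : Submodule ℝ (M → ℝ) where
  carrier := {f | (∃ K, LipschitzWith K f) ∧ f base = 0}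
  add_mem' := by
    rintro f g ⟨⟨Kf, hf⟩, hf0⟩ ⟨⟨Kg, hg⟩, hg0⟩
    exact ⟨⟨Kf + Kg, hf.add hg⟩, by simp [Pi.add_apply, hf0, hg0]⟩
  zero_mem' := ⟨⟨0, LipschitzWith.const 0⟩, rfl⟩
  smul_mem' := by
    rintro c f ⟨⟨Kf, hf⟩, hf0⟩
    exact ⟨⟨‖c‖₊ * Kf, (lipschitzWith_smul c).comp hf⟩, by simp [Pi.smul_apply, hf0]⟩

/-- The space `Lip₀(M)` of Lipschitz functions vanishing at the base point.
(A type synonym, so that it carries the Lipschitz-norm topology rather than the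
topology of pointwise convergence.) -/
def Lip0 (M : Type*) [MetricSpace M] (base : M) : Type _ := ↥(Lip0Sub M base)

variable {M : Type*} [MetricSpace M] {base : M}

instance : AddCommGroup (Lip0 M base) :=
  inferInstanceAs (AddCommGroup ↥(Lip0Sub M base))

noncomputable instance : Module ℝ (Lip0 M base) :=
  inferInstanceAs (Module ℝ ↥(Lip0Sub M base))

/-- An element of `Lip₀(M)` is a function on `M`. -/
instance : CoeFun (Lip0 M base) (fun _ => M → ℝ) :=
  ⟨fun f => (Subtype.val f : M → ℝ)⟩

theorem Lip0.prop (f : Lip0 M base) :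
    (∃ K, LipschitzWith K (f : M → ℝ)) ∧ (f : M → ℝ) base = 0 :=
  Subtype.prop f

/-- The quantity defining the Lipschitz norm. -/
noncomputable def Lip0.lipNorm (f : Lip0 M base) : ℝ :=
  ⨆ p : M × M, |f p.1 - f p.2| / dist p.1 p.2

theorem Lip0.ratio_le (f : Lip0 M base) {K : ℝ≥0} (hK : LipschitzWith K (f : M → ℝ))
    (p : M × M) : |f p.1 - f p.2| / dist p.1 p.2 ≤ K := by
  rcases eq_or_ne p.1 p.2 with h | h
  · simp [h, K.coe_nonneg]
  · rw [div_le_iff₀ (dist_pos.2 h)]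
    simpa [Real.dist_eq] using hK.dist_le_mul p.1 p.2

theorem Lip0.bddAbove (f : Lip0 M base) :
    BddAbove (Set.range fun p : M × M => |f p.1 - f p.2| / dist p.1 p.2) := by
  obtain ⟨K, hK⟩ := f.prop.1
  exact ⟨K, by rintro r ⟨p, rfl⟩; exact f.ratio_le hK p⟩

theorem Lip0.ratio_le_lipNorm (f : Lip0 M base) (p : M × M) :
    |f p.1 - f p.2| / dist p.1 p.2 ≤ f.lipNorm :=
  le_ciSup f.bddAbove p

theorem Lip0.lipNorm_nonneg (f : Lip0 M base) : 0 ≤ f.lipNorm := by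
  have := f.ratio_le_lipNorm (base, base)
  simpa using this

/-- The Lipschitz norm on `Lip₀(M)`: the best Lipschitz constant,
`‖f‖ = sup_{x ≠ y} |f x - f y| / d(x,y)`. -/
noncomputable instance Lip0.normedAddCommGroup :
    NormedAddCommGroup (Lip0 M base) :=
  AddGroupNorm.toNormedAddCommGroup
    { toFun := fun f => f.lipNorm
      map_zero' := by
        have h : ∀ p : M × M,
            |(0 : Lip0 M base) p.1 - (0 : Lip0 M base) p.2| / dist p.1 p.2 = 0 := by
          intro p
          show |(0:ℝ) - 0| / _ = 0
          simp
        haveI : Nonempty (M × M) := ⟨(base, base)⟩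
        simp only [Lip0.lipNorm, h, ciSup_const]
      add_le' := by
        intro f g
        haveI : Nonempty (M × M) := ⟨(base, base)⟩
        apply ciSup_le
        intro p
        rcases eq_or_ne p.1 p.2 with h | h
        · have : dist p.1 p.2 = 0 := by simp [h]
          rw [this, div_zero]
          exact add_nonneg f.lipNorm_nonneg g.lipNorm_nonneg
        · have hd : (0:ℝ) < dist p.1 p.2 := dist_pos.2 h
          have h1 : |(f + g) p.1 - (f + g) p.2| ≤ |f p.1 - f p.2| + |g p.1 - g p.2| := by
            show |(f p.1 + g p.1) - (f p.2 + g p.2)| ≤ _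
            rw [add_sub_add_comm]
            exact abs_add_le _ _
          calc |(f + g) p.1 - (f + g) p.2| / dist p.1 p.2
              ≤ (|f p.1 - f p.2| + |g p.1 - g p.2|) / dist p.1 p.2 := by gcongr
            _ ≤ f.lipNorm + g.lipNorm := by
                rw [add_div]
                exact add_le_add (f.ratio_le_lipNorm p) (g.ratio_le_lipNorm p)
      neg' := by
        intro f
        show Lip0.lipNorm _ = Lip0.lipNorm _
        unfold Lip0.lipNorm
        congr 1
        funext p
        show |(- f p.1) - (- f p.2)| / _ = _
        rw [neg_sub_neg, abs_sub_comm]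
      eq_zero_of_map_eq_zero' := by
        intro f hf
        have hconst : ∀ x y : M, f x = f y := by
          intro x y
          rcases eq_or_ne x y with h | h
          · rw [h]
          · have h1 : |f x - f y| / dist x y ≤ 0 := hf ▸ f.ratio_le_lipNorm (x, y)
            have h2 : (0:ℝ) ≤ |f x - f y| / dist x y :=
              div_nonneg (abs_nonneg _) dist_nonneg
            rcases div_eq_zero_iff.1 (le_antisymm h1 h2) with h3 | h3
            · exact sub_eq_zero.1 (abs_eq_zero.1 h3)
            · exact absurd h3 (dist_ne_zero.2 h)
        have hzero : ∀ x, f x = 0 := fun x => (hconst x base).trans f.prop.2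
        exact Subtype.ext (funext hzero) }

noncomputable instance Lip0.normedSpace : NormedSpace ℝ (Lip0 M base) :=
  { norm_smul_le := by
      intro c f
      haveI : Nonempty (M × M) := ⟨(base, base)⟩
      apply ciSup_le
      intro p
      have heq : |(c • f) p.1 - (c • f) p.2| / dist p.1 p.2
          = |c| * (|f p.1 - f p.2| / dist p.1 p.2) := by
        show |c * f p.1 - c * f p.2| / dist p.1 p.2 = _
        rw [← mul_sub, abs_mul, mul_div_assoc]
      rw [heq]
      calc |c| * (|f p.1 - f p.2| / dist p.1 p.2)
          ≤ |c| * f.lipNorm :=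
            mul_le_mul_of_nonneg_left (f.ratio_le_lipNorm p) (abs_nonneg c)
        _ = ‖c‖ * ‖f‖ := rfl }

/-- Evaluation functional `δ(x) ∈ Lip₀(M)*`. -/
noncomputable def deltaF (base : M) (x : M) : StrongDual ℝ (Lip0 M base) :=
  LinearMap.mkContinuous
    { toFun := fun f => f x
      map_add' := fun _ _ => rfl
      map_smul' := fun _ _ => rfl }
    (dist x base)
    (by
      intro f
      show |f x| ≤ dist x base * ‖f‖
      rcases eq_or_ne x base with h | h
      · simp [h, f.prop.2, mul_nonneg dist_nonneg f.lipNorm_nonneg]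
      · have h1 : |f x - f base| / dist x base ≤ ‖f‖ := f.ratio_le_lipNorm (x, base)
        have h2 : |f x - f base| ≤ dist x base * ‖f‖ := by
          rw [div_le_iff₀ (dist_pos.2 (by simpa using h))] at h1
          linarith [h1]
        simpa [f.prop.2] using h2)

/-- The Lipschitz-free space `F(M)`, realized as the closed linear span of the
evaluation functionals inside `Lip₀(M)*`. -/
noncomputable def FreeSpace (base : M) : Set (StrongDual ℝ (Lip0 M base)) :=
  closure ((Submodule.span ℝ (Set.range (deltaF base)) :
    Submodule ℝ (StrongDual ℝ (Lip0 M base))) : Set (StrongDual ℝ (Lip0 M base)))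

/-- A functional `φ ∈ Lip₀(M)* = F(M)**` is *normal* if for every norm-bounded net
converging pointwise and monotonically to `f ∈ Lip₀(M)`, the values `φ(fᵢ)` converge
to `φ(f)`. -/
def IsNormal (base : M) (φ : StrongDual ℝ (Lip0 M base)) : Prop :=
  ∀ (ι : Type) [Preorder ι] [Nonempty ι] [IsDirected ι (· ≤ ·)]
    (F : ι → Lip0 M base) (f : Lip0 M base) (C : ℝ),
    (∀ i, ‖F i‖ ≤ C) →
    ((∀ x, Monotone fun i => (F i) x) ∨ (∀ x, Antitone fun i => (F i) x)) →
    (∀ x, Tendsto (fun i => (F i) x) atTop (𝓝 (f x))) →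
    Tendsto (fun i => φ (F i)) atTop (𝓝 (φ f))

/-!
The cutoff `e_k = max (1 - d(·, E_k)/ε) 0` takes values in `[0, 1]`, is `ε⁻¹`-Lipschitz, equals `1`
on `E_k` and increases with `k`. As `|f| ≤ ‖f‖ R` on the support of `f`, the product rule
`|e x f x - e y f y| ≤ |f x - f y| + |e x - e y| |f y|` gives `‖e_k f‖ ≤ ‖f‖ (1 + R/ε)` for all `k`.
A norm-bounded, pointwise increasing net in `Lip₀(M)` is pointwise bounded above (by
`C d(x, 0)`), so it converges pointwise, and the Lipschitz bound passes to the limit, which thus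
lies in `Lip₀(M)`. Normality of `φ` then gives convergence of `φ(e_k f)`.
-/

noncomputable def distCutoff (s : Set M) (ε : ℝ) (x : M) : ℝ :=
  max (1 - infDist x s / ε) 0

section distCutoff

variable {s t : Set M} {ε : ℝ}

theorem abs_distCutoff_le_one (hε : 0 ≤ ε) (x : M) : |distCutoff s ε x| ≤ 1 := by
  rw [abs_of_nonneg (le_max_right _ _)]
  exact max_le (sub_le_self _ (div_nonneg infDist_nonneg hε)) zero_le_one

theorem abs_distCutoff_sub_le (hε : 0 ≤ ε) (x y : M) :
    |distCutoff s ε x - distCutoff s ε y| ≤ ε⁻¹ * dist x y :=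
  calc |distCutoff s ε x - distCutoff s ε y|
      ≤ |(1 - infDist x s / ε) - (1 - infDist y s / ε)| := abs_max_sub_max_le_abs _ _ _
    _ = ε⁻¹ * |infDist x s - infDist y s| := by
      rw [abs_sub_comm, ← abs_of_nonneg (inv_nonneg.2 hε), ← abs_mul]
      congr 1
      ring
    _ ≤ ε⁻¹ * dist x y := by
      gcongr
      simpa [Real.dist_eq] using (lipschitz_infDist_pt s).dist_le_mul x y

theorem distCutoff_mono (hst : s ⊆ t) (hs : s.Nonempty) (hε : 0 ≤ ε) (x : M) :
    distCutoff s ε x ≤ distCutoff t ε x :=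
  max_le_max_right _ <| sub_le_sub_left
    (div_le_div_of_nonneg_right (infDist_le_infDist_of_subset hst hs) hε) 1

theorem distCutoff_of_mem {x : M} (hx : x ∈ s) : distCutoff s ε x = 1 := by
  simp [distCutoff, infDist_zero_of_mem hx]

end distCutoff

namespace Lip0

theorem abs_sub_le_norm_mul_dist (f : Lip0 M base) (x y : M) :
    |f x - f y| ≤ ‖f‖ * dist x y := by
  rcases eq_or_ne x y with rfl | h
  · simp
  · have := f.ratio_le_lipNorm (x, y)
    rwa [div_le_iff₀ (dist_pos.2 h)] at this

theorem abs_apply_le_norm_mul_dist (f : Lip0 M base) (x : M) :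
    |f x| ≤ ‖f‖ * dist x base := by
  simpa [f.prop.2] using f.abs_sub_le_norm_mul_dist x base

theorem abs_apply_le_of_dist_le (f : Lip0 M base) {R : ℝ}
    (hsupp : ∀ x, f x ≠ 0 → dist x base ≤ R) (x : M) : |f x| ≤ ‖f‖ * max R 0 := by
  rcases eq_or_ne (f x) 0 with h | h
  · rw [h, abs_zero]
    exact mul_nonneg (norm_nonneg f) (le_max_right _ _)
  · exact (f.abs_apply_le_norm_mul_dist x).trans <|
      mul_le_mul_of_nonneg_left ((hsupp x h).trans (le_max_left _ _)) (norm_nonneg f)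

theorem norm_le_of_abs_sub_le {f : Lip0 M base} {C : ℝ} (hC : 0 ≤ C)
    (h : ∀ x y, |f x - f y| ≤ C * dist x y) : ‖f‖ ≤ C := by
  have : Nonempty (M × M) := ⟨(base, base)⟩
  refine ciSup_le fun p => ?_
  rcases eq_or_ne p.1 p.2 with hp | hp
  · simp [hp, hC]
  · rw [div_le_iff₀ (dist_pos.2 hp)]
    exact h p.1 p.2

theorem norm_le_of_apply_eq_mul {f h : Lip0 M base} {e : M → ℝ} {L B : ℝ} (hL : 0 ≤ L)
    (he : ∀ x, |e x| ≤ 1) (heL : ∀ x y, |e x - e y| ≤ L * dist x y) (hB : ∀ x, |f x| ≤ B)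
    (hh : ∀ x, h x = e x * f x) : ‖h‖ ≤ ‖f‖ + L * B := by
  have hB0 : 0 ≤ B := (abs_nonneg _).trans (hB base)
  refine norm_le_of_abs_sub_le (by positivity) fun x y => ?_
  rw [hh, hh]
  calc |e x * f x - e y * f y| = |e x * (f x - f y) + (e x - e y) * f y| := by ring_nf
    _ ≤ |e x| * |f x - f y| + |e x - e y| * |f y| := by
      rw [← abs_mul, ← abs_mul]
      exact abs_add_le _ _
    _ ≤ 1 * (‖f‖ * dist x y) + L * dist x y * B := by
      gcongr
      exacts [he x, f.abs_sub_le_norm_mul_dist x y, heL x y, hB y]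
    _ = (‖f‖ + L * B) * dist x y := by ring

theorem exists_tendsto_of_monotone {ι : Type*} [Preorder ι] [Nonempty ι] [IsDirected ι (· ≤ ·)]
    {g : ι → Lip0 M base} {C : ℝ} (hC : ∀ i, ‖g i‖ ≤ C) (hmono : ∀ x, Monotone fun i => g i x) :
    ∃ gl : Lip0 M base, ∀ x, Tendsto (fun i => g i x) atTop (𝓝 (gl x)) := by
  have hLip : ∀ i x y, |g i x - g i y| ≤ C * dist x y := fun i x y =>
    ((g i).abs_sub_le_norm_mul_dist x y).trans (mul_le_mul_of_nonneg_right (hC i) dist_nonneg)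
  have hbdd : ∀ x, BddAbove (Set.range fun i => g i x) := fun x =>
    ⟨C * dist x base, by
      rintro _ ⟨i, rfl⟩
      simpa [(g i).prop.2] using (le_abs_self _).trans (hLip i x base)⟩
  set gl : M → ℝ := fun x => ⨆ i, g i x
  have htends : ∀ x, Tendsto (fun i => g i x) atTop (𝓝 (gl x)) := fun x =>
    tendsto_atTop_ciSup (hmono x) (hbdd x)
  have hglLip : ∀ x y, |gl x - gl y| ≤ C * dist x y := fun x y =>
    le_of_tendsto ((htends x).sub (htends y)).abs (Eventually.of_forall fun i => hLip i x y)
  have hglbase : gl base = 0 := by simp [gl, fun i => (g i).prop.2]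
  have hC0 : 0 ≤ C := (norm_nonneg _).trans (hC (Classical.arbitrary ι))
  refine ⟨⟨gl, ⟨C.toNNReal, LipschitzWith.of_dist_le_mul fun x y => ?_⟩, hglbase⟩, htends⟩
  rw [Real.dist_eq, Real.coe_toNNReal _ hC0]
  exact hglLip x y

end Lip0

theorem truncation_net_converges_general (base : M)
    (φ : StrongDual ℝ (Lip0 M base)) (hφ : IsNormal base φ)
    (f : Lip0 M base) (hpos : ∀ x, 0 ≤ f x)
    (R : ℝ) (hsupp : ∀ x, f x ≠ 0 → dist x base ≤ R)
    (ε : ℝ) (hε : 0 < ε)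
    (E : ℕ → Finset M) (hE : Monotone E) (hEne : ∀ k, (E k).Nonempty)
    (g : ℕ → Lip0 M base)
    (hg : ∀ (k : ℕ) (x : M),
      (g k) x = max (1 - infDist x (E k : Set M) / ε) 0 * f x) :
    (∃ C, ∀ k, ‖g k‖ ≤ C) ∧
    (∀ x, Monotone fun k => (g k) x) ∧
    ∃ gl : M → ℝ,
      (∀ x, Tendsto (fun k => (g k) x) atTop (𝓝 (gl x))) ∧
      (∀ k, ∀ x ∈ E k, gl x = f x) ∧
      ∃ l : ℝ, Tendsto (fun k => φ (g k)) atTop (𝓝 l) := by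
  have hg' : ∀ k x, g k x = distCutoff (E k) ε x * f x := hg
  have hbound : ∀ k, ‖g k‖ ≤ ‖f‖ + ε⁻¹ * (‖f‖ * max R 0) := fun k =>
    Lip0.norm_le_of_apply_eq_mul (inv_nonneg.2 hε.le) (abs_distCutoff_le_one hε.le)
      (abs_distCutoff_sub_le hε.le) (f.abs_apply_le_of_dist_le hsupp) (hg' k)
  have hmono : ∀ x, Monotone fun k => g k x := fun x k l hkl => by
    simp only [hg']
    refine mul_le_mul_of_nonneg_right ?_ (hpos x)
    exact distCutoff_mono (by exact_mod_cast hE hkl) (Finset.coe_nonempty.2 (hEne k)) hε.le x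
  obtain ⟨gl, hgl⟩ := Lip0.exists_tendsto_of_monotone hbound hmono
  refine ⟨⟨_, hbound⟩, hmono, gl, hgl, fun k x hx => ?_, φ gl,
    hφ ℕ g gl _ hbound (Or.inl hmono) hgl⟩
  refine tendsto_nhds_unique (hgl x) (tendsto_const_nhds.congr' ?_)
  filter_upwards [eventually_ge_atTop k] with l hl
  rw [hg', distCutoff_of_mem (by exact_mod_cast hE hl hx), one_mul]

/-- for normal `φ`, nonnegative `f ∈ Lip₀(M)` with bounded support,
`ε > 0` and an increasing sequence of nonempty finite sets `E_k` with union `E`, the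
functions `e_k·f` (with `e_k(x) = max(1 - d(x,E_k)/ε, 0)`) form a norm-bounded
sequence increasing pointwise to a limit `g` with `g = f` on `E`, and `φ(e_k·f)`
converges. -/
theorem truncation_net_converges [CompleteSpace M] (base : M)
    (φ : StrongDual ℝ (Lip0 M base)) (hφ : IsNormal base φ)
    (f : Lip0 M base) (hpos : ∀ x, 0 ≤ f x)
    (R : ℝ) (hsupp : ∀ x, f x ≠ 0 → dist x base ≤ R)
    (ε : ℝ) (hε : 0 < ε)
    (E : ℕ → Finset M) (hE : Monotone E) (hEne : ∀ k, (E k).Nonempty)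
    (g : ℕ → Lip0 M base)
    (hg : ∀ (k : ℕ) (x : M),
      (g k) x = max (1 - infDist x (E k : Set M) / ε) 0 * f x) :
    (∃ C, ∀ k, ‖g k‖ ≤ C) ∧
    (∀ x, Monotone fun k => (g k) x) ∧
    ∃ gl : M → ℝ,
      (∀ x, Tendsto (fun k => (g k) x) atTop (𝓝 (gl x))) ∧
      (∀ k, ∀ x ∈ E k, gl x = f x) ∧
      ∃ l : ℝ, Tendsto (fun k => φ (g k)) atTop (𝓝 l) :=
  truncation_net_converges_general base φ hφ f hpos R hsupp ε hε E hE hEne g hg
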